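/- arXiv:2102.10108 — 2 statements merged into one kernel-verified Lean document; each statement's English description precedes it below -/
import Mathlib

section
/- The plane Γ defined by A = B and P_B = 2P_A is invariant under the Hamiltonian flow: if at some time A = B and P_B = 2P_A, then the vector field satisfies Ȧ = Ḃ and Ṗ_B = 2Ṗ_A at that point. -/
/-- The plane `Γ : A = B, P_B = 2P_A` is invariant under the Bianchi IX Hamiltonian
vector field: on `Γ` one has `Ȧ = Ḃ` and `Ṗ_B = 2·Ṗ_A`. -/
theorem bianchiIX_invariant_plane (lam : ℝ) :
    ∀ A B PA PB : ℝ, B ≠ 0 → A = B → PB = 2 * PA →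
      (PB / (4 * B) - A * PA / (4 * B ^ 2) = PA / (4 * B)) ∧
      (PA * PB / (4 * B ^ 2) - A * PA ^ 2 / (4 * B ^ 3) - A ^ 3 / B ^ 3 + 4 * lam * A * B
        = 2 * (PA ^ 2 / (8 * B ^ 2) - 2 + 3 * A ^ 2 / (2 * B ^ 2) + 2 * lam * B ^ 2)) := by
  intro A B PA PB hB hA hP
  subst hA hP
  constructor <;> field_simp <;> ring
end

section
/- If x : ℝ → ℝ is a positive function satisfying the second-order ODE ẍ = −1/(8x) + λx/2 − ẋ²/(2x), then the quantity E(t) = 6·x(t)·ẋ(t)² + (3/2)·x(t) − 2λ·x(t)³ is constant in t. -/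
/-- If a positive function `x` satisfies `ẍ = −1/(8x) + λx/2 − ẋ²/(2x)`, then
`E(t) = 6 x ẋ² + (3/2) x − 2λ x³` is constant in `t`. -/
theorem taub_energy_conserved (lam : ℝ) (x x' : ℝ → ℝ)
    (hpos : ∀ t, 0 < x t)
    (hx : ∀ t, HasDerivAt x (x' t) t)
    (hx' : ∀ t, HasDerivAt x'
      (-1 / (8 * x t) + lam * x t / 2 - (x' t) ^ 2 / (2 * x t)) t) :
    ∀ s t : ℝ,
      6 * x s * (x' s) ^ 2 + (3 / 2) * x s - 2 * lam * (x s) ^ 3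
        = 6 * x t * (x' t) ^ 2 + (3 / 2) * x t - 2 * lam * (x t) ^ 3 := by
  have key : ∀ t : ℝ, HasDerivAt
      (fun t => 6 * x t * (x' t) ^ 2 + (3 / 2) * x t - 2 * lam * (x t) ^ 3) 0 t := by
    intro t
    have hxne : x t ≠ 0 := (hpos t).ne'
    have h := (((hx t).const_mul 6).mul ((hx' t).pow 2)).add ((hx t).const_mul (3/2))
      |>.sub (((hx t).pow 3).const_mul (2 * lam))
    refine HasDerivAt.congr_deriv h ?_
    simp only [Pi.pow_apply, Nat.cast_ofNat]
    field_simp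
    ring
  intro s t
  have hc : ∀ a b : ℝ, (fun t => 6 * x t * (x' t) ^ 2 + (3 / 2) * x t - 2 * lam * (x t) ^ 3) a
      = (fun t => 6 * x t * (x' t) ^ 2 + (3 / 2) * x t - 2 * lam * (x t) ^ 3) b := by
    intro a b
    exact is_const_of_deriv_eq_zero (fun t => (key t).differentiableAt)
      (fun t => (key t).deriv) a b
  simpa using hc s t
end
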